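/- arXiv:math/0509612 — 3 statements merged into one kernel-verified Lean document; each statement's English description precedes it below -/
import Mathlib

section
/- Let x₀ ∈ ℝ and let ĥ : [x₀,∞) → ℝ be continuous with ĥ(z) < 0 for all z ≥ x₀ and ∫_{x₀}^∞ 1/(−ĥ(z)) dz < ∞. Then for every t > 0 there exists M_t < ∞ such that every differentiable function y : [0,t] → [x₀,∞) with y′(s) = ĥ(y(s)) for all s ∈ [0,t] satisfies y(t) ≤ M_t. In particular, any y as above with y(t) > x₀ satisfies t = ∫_{y(t)}^{y(0)} 1/(−ĥ(z)) dz ≤ ∫_{y(t)}^∞ 1/(−ĥ(z)) dz. -/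
open Set MeasureTheory intervalIntegral

/-- The "coming down from infinity" estimate (64)–(65): if `ĥ < 0` on `[x₀,∞)` and
`∫_{x₀}^∞ 1/(-ĥ) < ∞`, then for every `t > 0` solutions of `y' = ĥ(y)` staying in
`[x₀,∞)` are bounded at time `t` uniformly in the initial value; moreover any such
solution with `y(t) > x₀` satisfies `t = ∫_{y(t)}^{y(0)} 1/(-ĥ) ≤ ∫_{y(t)}^∞ 1/(-ĥ)`. -/
theorem stmt13 (x₀ : ℝ) (hh : ℝ → ℝ)
    (hc : ContinuousOn hh (Ici x₀)) (hneg : ∀ z ∈ Ici x₀, hh z < 0)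
    (hint : IntegrableOn (fun z => 1 / (-hh z)) (Ici x₀)) :
    ∀ t : ℝ, 0 < t →
      (∃ M : ℝ, ∀ y : ℝ → ℝ,
        (∀ s ∈ Icc (0:ℝ) t, y s ∈ Ici x₀) →
        (∀ s ∈ Icc (0:ℝ) t, HasDerivWithinAt y (hh (y s)) (Icc 0 t) s) →
        y t ≤ M) ∧
      (∀ y : ℝ → ℝ,
        (∀ s ∈ Icc (0:ℝ) t, y s ∈ Ici x₀) →
        (∀ s ∈ Icc (0:ℝ) t, HasDerivWithinAt y (hh (y s)) (Icc 0 t) s) →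
        x₀ < y t →
        t = (∫ z in (y t)..(y 0), 1 / (-hh z)) ∧
          t ≤ ∫ z in Ici (y t), 1 / (-hh z)) := by
  set g : ℝ → ℝ := fun z => 1 / (-hh z) with hg_def
  have hgpos : ∀ z ∈ Ici x₀, 0 < g z := by
    intro z hz
    have h1 : 0 < -hh z := neg_pos.mpr (hneg z hz)
    simpa [hg_def] using one_div_pos.mpr h1
  have hgcont : ContinuousOn g (Ici x₀) :=
    continuousOn_const.div hc.neg (fun z hz => (neg_pos.mpr (hneg z hz)).ne')
  intro t ht
  -- Key identity: t = ∫_{y t}^{y 0} g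
  have key : ∀ y : ℝ → ℝ,
      (∀ s ∈ Icc (0:ℝ) t, y s ∈ Ici x₀) →
      (∀ s ∈ Icc (0:ℝ) t, HasDerivWithinAt y (hh (y s)) (Icc 0 t) s) →
      t = ∫ z in (y t)..(y 0), g z := by
    intro y hmem hder
    have huIcc : uIcc (0:ℝ) t = Icc 0 t := uIcc_of_le ht.le
    have ycont : ContinuousOn y (Icc 0 t) := fun s hs => (hder s hs).continuousWithinAt
    have hmaps : MapsTo y (Icc 0 t) (Ici x₀) := hmem
    have hsub := intervalIntegral.integral_comp_smul_deriv''
      (f := y) (f' := fun s => hh (y s)) (g := g) (a := (0:ℝ)) (b := t)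
      (by rw [huIcc]; exact ycont)
      (by
        intro s hs
        rw [min_eq_left ht.le, max_eq_right ht.le] at hs
        have hs' : s ∈ Icc (0:ℝ) t := Ioo_subset_Icc_self hs
        exact ((hder s hs').hasDerivAt (Icc_mem_nhds hs.1 hs.2)).hasDerivWithinAt)
      (by rw [huIcc]; exact hc.comp ycont hmaps)
      (by rw [huIcc]; exact hgcont.mono (image_subset_iff.mpr hmaps))
    have hlhs : (∫ s in (0:ℝ)..t, hh (y s) • (g ∘ y) s) = -t := by
      rw [intervalIntegral.integral_congr (g := fun _ => (-1:ℝ))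
        (by
          intro s hs
          rw [huIcc] at hs
          have h1 : hh (y s) < 0 := hneg _ (hmem s hs)
          have h2 : hh (y s) ≠ 0 := h1.ne
          simp only [Function.comp, smul_eq_mul, hg_def]
          field_simp)]
      simp
    have := hsub.symm.trans hlhs
    rw [intervalIntegral.integral_symm]
    linarith
  -- Tail inequality: t ≤ ∫_{Ici (y t)} g
  have tail : ∀ y : ℝ → ℝ,
      (∀ s ∈ Icc (0:ℝ) t, y s ∈ Ici x₀) →
      (∀ s ∈ Icc (0:ℝ) t, HasDerivWithinAt y (hh (y s)) (Icc 0 t) s) →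
      t ≤ ∫ z in Ici (y t), g z := by
    intro y hmem hder
    have hkey := key y hmem hder
    have hy0 : y 0 ∈ Ici x₀ := hmem 0 ⟨le_refl _, ht.le⟩
    have hyt : y t ∈ Ici x₀ := hmem t ⟨ht.le, le_refl _⟩
    have hle : y t ≤ y 0 := by
      by_contra h
      push_neg at h
      have h0 : 0 ≤ ∫ z in (y 0)..(y t), g z := by
        refine intervalIntegral.integral_nonneg h.le fun u hu => ?_
        exact (hgpos u (le_trans hy0 hu.1)).le
      rw [intervalIntegral.integral_symm] at hkey
      linarith
    refine hkey.le.trans ?_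
    rw [intervalIntegral.integral_of_le hle]
    refine setIntegral_mono_set (hint.mono_set (Ici_subset_Ici.mpr hyt)) ?_
      (HasSubset.Subset.eventuallyLE (fun z hz => le_of_lt hz.1))
    exact ae_restrict_of_forall_mem measurableSet_Ici
      fun z hz => (hgpos z (le_trans (mem_Ici.mp hyt) (mem_Ici.mp hz) : x₀ ≤ z)).le
  constructor
  · -- uniform bound
    have hmono : Monotone (fun n : ℕ => Ico x₀ (x₀ + n)) := by
      intro m n hmn
      exact Ico_subset_Ico le_rfl (by exact_mod_cast add_le_add (le_refl x₀) (Nat.cast_le.mpr hmn))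
    have hunion : (⋃ n : ℕ, Ico x₀ (x₀ + n)) = Ici x₀ := by
      ext z
      simp only [mem_iUnion, mem_Ico, mem_Ici]
      constructor
      · rintro ⟨n, h1, _⟩; exact h1
      · intro hz
        obtain ⟨n, hn⟩ := exists_nat_gt (z - x₀)
        exact ⟨n, hz, by linarith⟩
    have htend := tendsto_setIntegral_of_monotone (μ := volume) (f := g)
      (fun n : ℕ => measurableSet_Ico) hmono (by rw [hunion]; exact hint)
    rw [hunion] at htend
    have hev : ∀ᶠ n : ℕ in Filter.atTop,
        (∫ z in Ici x₀, g z) - (∫ z in Ico x₀ (x₀ + n), g z) < t := by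
      have := htend.eventually (eventually_gt_nhds
        (show (∫ z in Ici x₀, g z) - t < ∫ z in Ici x₀, g z by linarith))
      filter_upwards [this] with n hn
      linarith
    obtain ⟨n, hn⟩ := hev.exists
    set M : ℝ := x₀ + n with hM_def
    have hMx : x₀ ≤ M := le_add_of_nonneg_right n.cast_nonneg
    have hdecomp : (∫ z in Ici x₀, g z)
        = (∫ z in Ico x₀ M, g z) + ∫ z in Ici M, g z := by
      have hdisj : Disjoint (Ico x₀ M) (Ici M) :=
        Set.disjoint_left.mpr fun z hz hz' => absurd hz.2 (not_lt.mpr hz')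
      rw [← setIntegral_union hdisj measurableSet_Ici (hint.mono_set Ico_subset_Ici_self)
        (hint.mono_set (Ici_subset_Ici.mpr hMx)), Ico_union_Ici_eq_Ici hMx]
    have hMint : (∫ z in Ici M, g z) < t := by
      rw [hM_def] at hdecomp ⊢
      linarith
    refine ⟨M, fun y hmem hder => ?_⟩
    by_contra hgt
    push_neg at hgt
    have h1 := tail y hmem hder
    have h2 : (∫ z in Ici (y t), g z) ≤ ∫ z in Ici M, g z := by
      refine setIntegral_mono_set (hint.mono_set (Ici_subset_Ici.mpr hMx)) ?_
        (HasSubset.Subset.eventuallyLE (Ici_subset_Ici.mpr hgt.le))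
      exact ae_restrict_of_forall_mem measurableSet_Ici
        fun z hz => (hgpos z (le_trans hMx hz)).le
    linarith
  · intro y hmem hder _
    exact ⟨key y hmem hder, tail y hmem hder⟩
end

section
/- Let Λ be a finite nonempty set, let m : Λ × Λ → [0,∞), and let α ≥ 0, K ∈ ℝ, and β, γ > 0. Define H : ℝ^Λ × ℝ^Λ → ℝ by H(x,y) = exp( −(γ/β) ∑_{i∈Λ} x_i y_i ). For a twice continuously differentiable function f : ℝ^Λ → ℝ define (𝒢^m f)(x) := ∑_{i∈Λ} [ α( ∑_{j∈Λ} m(i,j)x_j − x_i ) ∂f/∂x_i (x) + γ x_i(K − x_i) ∂f/∂x_i (x) + β x_i ∂²f/∂x_i² (x) ], and let m^† denote the transposed matrix m^†(i,j) = m(j,i). Then for all x, y ∈ [0,∞)^Λ: 𝒢^m( H(·,y) )(x) = 𝒢^{m^†}( H(x,·) )(y). -/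
open Finset

/-- The generator (100) of the finite system (49) of interacting Feller diffusions
with logistic growth, applied to a function `f` of the coordinates. -/
noncomputable def logGen {Λ : Type*} [Fintype Λ] [DecidableEq Λ]
    (m : Λ → Λ → ℝ) (α K β γ : ℝ) (f : (Λ → ℝ) → ℝ) (x : Λ → ℝ) : ℝ :=
  ∑ i, ((α * ((∑ j, m i j * x j) - x i) + γ * x i * (K - x i)) *
          deriv (fun t => f (Function.update x i t)) (x i) +
        β * x i * iteratedDeriv 2 (fun t => f (Function.update x i t)) (x i))

private lemma hasDerivAt_exp_lin (b c t : ℝ) :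
    HasDerivAt (fun s => Real.exp (b * s + c)) (b * Real.exp (b * t + c)) t := by
  have h : HasDerivAt (fun s : ℝ => b * s + c) b t := by
    simpa using ((hasDerivAt_id t).const_mul b).add_const c
  simpa [mul_comm] using h.exp

private lemma deriv_exp_lin (b c : ℝ) :
    deriv (fun s => Real.exp (b * s + c)) = fun t => b * Real.exp (b * t + c) :=
  funext fun t => (hasDerivAt_exp_lin b c t).deriv

private lemma iteratedDeriv_two_exp_lin (b c t : ℝ) :
    iteratedDeriv 2 (fun s => Real.exp (b * s + c)) t = b * (b * Real.exp (b * t + c)) := by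
  rw [iteratedDeriv_succ, iteratedDeriv_one, deriv_exp_lin]
  exact ((hasDerivAt_exp_lin b c t).const_mul b).deriv

private lemma sum_update_mul_right {Λ : Type*} [Fintype Λ] [DecidableEq Λ]
    (x y : Λ → ℝ) (i : Λ) (t : ℝ) :
    ∑ j, Function.update x i t j * y j = t * y i + ∑ j ∈ univ.erase i, x j * y j := by
  rw [← Finset.add_sum_erase _ (fun j => Function.update x i t j * y j) (mem_univ i)]
  rw [Function.update_self]
  congr 1
  exact Finset.sum_congr rfl fun j hj => by
    rw [Function.update_of_ne (Finset.mem_erase.mp hj).1]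

private lemma sum_update_mul_left {Λ : Type*} [Fintype Λ] [DecidableEq Λ]
    (x y : Λ → ℝ) (i : Λ) (t : ℝ) :
    ∑ j, x j * Function.update y i t j = x i * t + ∑ j ∈ univ.erase i, x j * y j := by
  rw [← Finset.add_sum_erase _ (fun j => x j * Function.update y i t j) (mem_univ i)]
  rw [Function.update_self]
  congr 1
  exact Finset.sum_congr rfl fun j hj => by
    rw [Function.update_of_ne (Finset.mem_erase.mp hj).1]

/-- The generator identity (101) behind the self-duality Theorem 3: with the duality
function `H(x,y) = exp(-(γ/β)⟨x,y⟩)`, one has `𝒢^m H(·,y)(x) = 𝒢^{m†} H(x,·)(y)`. -/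
theorem stmt14 {Λ : Type*} [Fintype Λ] [DecidableEq Λ] [Nonempty Λ]
    (m : Λ → Λ → ℝ) (hm : ∀ i j, 0 ≤ m i j)
    (α K β γ : ℝ) (hα : 0 ≤ α) (hβ : 0 < β) (hγ : 0 < γ)
    (x y : Λ → ℝ) (hx : ∀ i, 0 ≤ x i) (hy : ∀ i, 0 ≤ y i) :
    logGen m α K β γ (fun x' => Real.exp (-(γ / β) * ∑ i, x' i * y i)) x =
      logGen (fun i j => m j i) α K β γ
        (fun y' => Real.exp (-(γ / β) * ∑ i, x i * y' i)) y := by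
  set c : ℝ := -(γ / β) with hc
  set E : ℝ := Real.exp (c * ∑ j, x j * y j) with hE
  -- rewrite the functions appearing inside deriv as exp of a linear function
  have hfun1 : ∀ i : Λ, (fun t => Real.exp (c * ∑ j, Function.update x i t j * y j)) =
      fun t => Real.exp ((c * y i) * t + c * ∑ j ∈ univ.erase i, x j * y j) := by
    intro i; funext t
    rw [sum_update_mul_right]; congr 1; ring
  have hfun2 : ∀ i : Λ, (fun t => Real.exp (c * ∑ j, x j * Function.update y i t j)) =
      fun t => Real.exp ((c * x i) * t + c * ∑ j ∈ univ.erase i, x j * y j) := by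
    intro i; funext t
    rw [sum_update_mul_left]; congr 1; ring
  have hexp1 : ∀ i : Λ, (c * y i) * x i + c * ∑ j ∈ univ.erase i, x j * y j =
      c * ∑ j, x j * y j := by
    intro i
    rw [← Finset.add_sum_erase _ (fun j => x j * y j) (mem_univ i)]; ring
  have hexp2 : ∀ i : Λ, (c * x i) * y i + c * ∑ j ∈ univ.erase i, x j * y j =
      c * ∑ j, x j * y j := by
    intro i
    rw [← Finset.add_sum_erase _ (fun j => x j * y j) (mem_univ i)]; ring
  have hd1 : ∀ i : Λ,
      deriv (fun t => Real.exp (c * ∑ j, Function.update x i t j * y j)) (x i) =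
        (c * y i) * E := by
    intro i; rw [hfun1 i, deriv_exp_lin]; simp only [hexp1 i, hE]
  have hd2 : ∀ i : Λ,
      deriv (fun t => Real.exp (c * ∑ j, x j * Function.update y i t j)) (y i) =
        (c * x i) * E := by
    intro i; rw [hfun2 i, deriv_exp_lin]; simp only [hexp2 i, hE]
  have hdd1 : ∀ i : Λ,
      iteratedDeriv 2 (fun t => Real.exp (c * ∑ j, Function.update x i t j * y j)) (x i) =
        (c * y i) * ((c * y i) * E) := by
    intro i; rw [hfun1 i, iteratedDeriv_two_exp_lin]; simp only [hexp1 i, hE]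
  have hdd2 : ∀ i : Λ,
      iteratedDeriv 2 (fun t => Real.exp (c * ∑ j, x j * Function.update y i t j)) (y i) =
        (c * x i) * ((c * x i) * E) := by
    intro i; rw [hfun2 i, iteratedDeriv_two_exp_lin]; simp only [hexp2 i, hE]
  simp only [logGen, hd1, hd2, hdd1, hdd2]
  -- now a pure algebraic identity about sums
  have hmig : ∑ i, y i * (∑ j, m i j * x j) = ∑ i, x i * (∑ j, m j i * y j) := by
    simp_rw [Finset.mul_sum]
    rw [Finset.sum_comm]
    exact Finset.sum_congr rfl fun i _ => Finset.sum_congr rfl fun j _ => by ring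
  have hL : ∀ i : Λ,
      (α * ((∑ j, m i j * x j) - x i) + γ * x i * (K - x i)) * ((c * y i) * E) +
        β * x i * ((c * y i) * ((c * y i) * E)) =
      (c * α * E) * (y i * (∑ j, m i j * x j)) +
        ((α * (- x i) + γ * x i * (K - x i)) * ((c * y i) * E) +
          β * x i * ((c * y i) * ((c * y i) * E))) := by
    intro i; ring
  have hR : ∀ i : Λ,
      (α * ((∑ j, m j i * y j) - y i) + γ * y i * (K - y i)) * ((c * x i) * E) +
        β * y i * ((c * x i) * ((c * x i) * E)) =
      (c * α * E) * (x i * (∑ j, m j i * y j)) +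
        ((α * (- y i) + γ * y i * (K - y i)) * ((c * x i) * E) +
          β * y i * ((c * x i) * ((c * x i) * E))) := by
    intro i; ring
  simp only [hL, hR, Finset.sum_add_distrib, ← Finset.mul_sum, hmig]
  congr 1
  rw [← Finset.sum_add_distrib, ← Finset.sum_add_distrib]
  apply Finset.sum_congr rfl
  intro i _
  have hβ' : β ≠ 0 := ne_of_gt hβ
  rw [hc]; field_simp
  ring
end

section
/- Let α, β, γ > 0 and K > 0, and set h(x) = γx(K−x), g(x) = βx. Then ∫_0^∞ (h(y)/g(y)) exp( ∫_1^y (−αx+h(x))/g(x) dx ) dy ≤ 0 holds if and only if ∫_0^∞ exp( Kγy − (γβ/2)y² ) · α e^{−αy} dy ≤ 1. -/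
open Filter in
lemma lin_interval (a b c d : ℝ) :
    (∫ x in a..b, (c - d * x)) = c * (b - a) - d * (b ^ 2 - a ^ 2) / 2 := by
  rw [intervalIntegral.integral_sub intervalIntegrable_const
      ((continuous_mul_left d).intervalIntegrable a b),
    intervalIntegral.integral_const, intervalIntegral.integral_const_mul,
    integral_id, smul_eq_mul]
  ring

open Set MeasureTheory intervalIntegral Filter Real

lemma gauss_lin_integrable {b : ℝ} (hb : 0 < b) (p c d : ℝ) :
    Integrable (fun y : ℝ => (c + d * y) * Real.exp (p * y - b * y ^ 2)) := by
  set e := p / (2 * b) with he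
  have h1 : Integrable (fun y : ℝ => Real.exp (-b * (y - e) ^ 2)) :=
    (integrable_exp_neg_mul_sq hb).comp_sub_right e
  have h2 : Integrable (fun y : ℝ => (y - e) * Real.exp (-b * (y - e) ^ 2)) :=
    (integrable_mul_exp_neg_mul_sq hb).comp_sub_right e
  have h3 := (((h1.const_mul (c + d * e)).add (h2.const_mul d)).const_mul
      (Real.exp (p ^ 2 / (4 * b))))
  refine h3.congr (Filter.Eventually.of_forall fun y => ?_)
  have hkey : p * y - b * y ^ 2 = p ^ 2 / (4 * b) + -b * (y - e) ^ 2 := by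
    rw [he]; field_simp
    ring
  simp only [Pi.add_apply]
  rw [hkey, Real.exp_add]
  ring

/-- In the logistic Feller case `h(x) = γx(K-x)`, `g(x) = βx`, the local extinction
condition (10) of Theorem 1 simplifies to condition (12). -/
theorem stmt17 (α β γ K : ℝ) (hα : 0 < α) (hβ : 0 < β) (hγ : 0 < γ) (hK : 0 < K) :
    (∫ y in Ioi (0:ℝ), γ * y * (K - y) / (β * y) *
        Real.exp (∫ x in (1:ℝ)..y, (-α * x + γ * x * (K - x)) / (β * x))) ≤ 0 ↔
      (∫ y in Ioi (0:ℝ),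
        Real.exp (K * γ * y - γ * β / 2 * y ^ 2) * (α * Real.exp (-α * y))) ≤ 1 := by
  set Q : ℝ → ℝ := fun y => ((γ * K - α) * y - γ * y ^ 2 / 2) / β with hQ
  set J : ℝ := ∫ y in Ioi (0:ℝ), Real.exp (Q y) with hJ
  -- inner integral computation
  have inner : ∀ y ∈ Ioi (0:ℝ),
      (∫ x in (1:ℝ)..y, (-α * x + γ * x * (K - x)) / (β * x)) = Q y - Q 1 := by
    intro y hy
    have hy0 : (0:ℝ) < y := hy
    have hcongr : (∫ x in (1:ℝ)..y, (-α * x + γ * x * (K - x)) / (β * x))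
        = ∫ x in (1:ℝ)..y, ((γ * K - α) - γ * x) / β := by
      apply intervalIntegral.integral_congr
      intro x hx
      have hx0 : 0 < x := lt_of_lt_of_le (lt_min one_pos hy0) hx.1
      field_simp
      ring
    rw [hcongr]
    have : (∫ x in (1:ℝ)..y, ((γ * K - α) - γ * x) / β)
        = (∫ x in (1:ℝ)..y, ((γ * K - α) - γ * x)) / β := by
      rw [intervalIntegral.integral_div]
    rw [this, show (∫ x in (1:ℝ)..y, (γ * K - α - γ * x))
        = (γ * K - α) * (y - 1) - γ * (y ^ 2 - 1 ^ 2) / 2 from lin_interval 1 y (γ * K - α) γ]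
    simp only [hQ, smul_eq_mul]
    field_simp
    ring
  -- the LHS integrand rewritten
  set g : ℝ → ℝ := fun y => Real.exp (Q y - Q 1) with hg
  set g' : ℝ → ℝ := fun y => ((γ * K - α - γ * y) / β) * g y with hg'
  have hQ1 : ∀ y, Q y - Q 1 = ((γ * K - α) / β) * y - (γ / (2 * β)) * y ^ 2 - Q 1 := by
    intro y; rw [hQ]; field_simp
  have hbpos : 0 < γ / (2 * β) := by positivity
  have hgI : Integrable g := by
    have := (gauss_lin_integrable hbpos ((γ * K - α) / β) 1 0).const_mul (Real.exp (-Q 1))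
    refine this.congr (Filter.Eventually.of_forall fun y => ?_)
    rw [hg]; simp only []
    rw [hQ1 y]
    simp only [Real.exp_sub, Real.exp_neg]
    field_simp
    ring
  have hg'I : Integrable g' := by
    have := (gauss_lin_integrable hbpos ((γ * K - α) / β)
        ((γ * K - α) / β) (-(γ / β))).const_mul (Real.exp (-Q 1))
    refine this.congr (Filter.Eventually.of_forall fun y => ?_)
    rw [hg', hg]; simp only []
    rw [hQ1 y]
    simp only [Real.exp_sub, Real.exp_neg]
    field_simp
    ring
  have hderiv : ∀ y : ℝ, HasDerivAt g (g' y) y := by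
    intro y
    have h1 : HasDerivAt (fun y : ℝ => Q y - Q 1) ((γ * K - α - γ * y) / β) y := by
      have h0 := ((((hasDerivAt_id y).const_mul (γ * K - α)).sub
        (((hasDerivAt_pow 2 y).const_mul γ).div_const 2)).div_const β).sub_const (Q 1)
      exact h0.congr_deriv (by push_cast; ring)
    exact h1.exp.congr_deriv (mul_comm _ _)
  have htend : Tendsto g atTop (nhds 0) := by
    have h1 : Tendsto (fun y : ℝ => Q y - Q 1) atTop atBot := by
      have hlin : Tendsto (fun y : ℝ => ((γ * K - α) / β) + -((γ / (2 * β)) * y))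
          atTop atBot :=
        tendsto_atBot_add_const_left _ _ (tendsto_neg_atBot_iff.mpr
          ((tendsto_const_mul_atTop_of_pos hbpos).2 tendsto_id))
      have h2 : Tendsto (fun y : ℝ => y * (((γ * K - α) / β) + -((γ / (2 * β)) * y)))
          atTop atBot := tendsto_id.atTop_mul_atBot₀ hlin
      have := tendsto_atBot_add_const_right _ (-Q 1) h2
      refine this.congr fun y => ?_
      rw [hQ1 y]; ring
    exact Real.tendsto_exp_atBot.comp h1
  -- LHS integral computation
  have hLHS : (∫ y in Ioi (0:ℝ), γ * y * (K - y) / (β * y) *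
        Real.exp (∫ x in (1:ℝ)..y, (-α * x + γ * x * (K - x)) / (β * x)))
      = Real.exp (-Q 1) * ((α / β) * J - 1) := by
    have step1 : (∫ y in Ioi (0:ℝ), γ * y * (K - y) / (β * y) *
          Real.exp (∫ x in (1:ℝ)..y, (-α * x + γ * x * (K - x)) / (β * x)))
        = ∫ y in Ioi (0:ℝ), (g' y + (α / β) * g y) := by
      apply setIntegral_congr_fun measurableSet_Ioi
      intro y hy
      have hy0 : (0:ℝ) < y := hy
      dsimp only
      rw [inner y hy]
      rw [hg', hg]; simp only []
      field_simp
      ring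
    rw [step1, integral_add hg'I.integrableOn ((hgI.const_mul _).integrableOn)]
    have hfund : (∫ y in Ioi (0:ℝ), g' y) = 0 - g 0 :=
      integral_Ioi_of_hasDerivAt_of_tendsto (hderiv 0).continuousAt.continuousWithinAt
        (fun x _ => hderiv x) hg'I.integrableOn htend
    have hgval : (∫ y in Ioi (0:ℝ), (α / β) * g y) = (α / β) * (Real.exp (-Q 1) * J) := by
      rw [MeasureTheory.integral_const_mul]
      congr 1
      rw [hJ, ← MeasureTheory.integral_const_mul]
      apply setIntegral_congr_fun measurableSet_Ioi
      intro y _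
      dsimp only
      rw [hg]; simp only []
      rw [sub_eq_add_neg, Real.exp_add]; ring
    rw [hfund, hgval, hg]
    simp only []
    rw [show (0:ℝ) - Real.exp (Q 0 - Q 1) = -Real.exp (-Q 1) by
      simp [hQ]]
    ring
  -- RHS integral computation
  have hRHS : (∫ y in Ioi (0:ℝ),
        Real.exp (K * γ * y - γ * β / 2 * y ^ 2) * (α * Real.exp (-α * y)))
      = (α / β) * J := by
    have step1 : (∫ y in Ioi (0:ℝ),
          Real.exp (K * γ * y - γ * β / 2 * y ^ 2) * (α * Real.exp (-α * y)))
        = ∫ y in Ioi (0:ℝ), (fun u => α * Real.exp (Q u)) (β * y) := by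
      apply setIntegral_congr_fun measurableSet_Ioi
      intro y _
      dsimp only
      simp only [hQ]
      rw [show ((γ * K - α) * (β * y) - γ * (β * y) ^ 2 / 2) / β
          = K * γ * y - γ * β / 2 * y ^ 2 + -α * y by field_simp; ring, Real.exp_add]
      ring
    rw [step1, MeasureTheory.integral_comp_mul_left_Ioi (fun u => α * Real.exp (Q u)) 0 hβ,
      mul_zero, MeasureTheory.integral_const_mul, smul_eq_mul, ← hJ]
    field_simp
  rw [hLHS, hRHS]
  have hE : 0 < Real.exp (-Q 1) := Real.exp_pos _
  constructor
  · intro h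
    by_contra hc
    push_neg at hc
    nlinarith [hE, h, hc]
  · intro h
    have h2 : α / β * J - 1 ≤ 0 := by linarith
    have h3 : Real.exp (-Q 1) * (α / β * J - 1) ≤ 0 :=
      mul_nonpos_iff.mpr (Or.inl ⟨hE.le, h2⟩)
    linarith
end
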